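/- arXiv:2004.00738 — 2 statements merged into one kernel-verified Lean document; each statement's English description precedes it below -/
import Mathlib

section
/- The first landscape function is 1-Lipschitz with respect to the bottleneck distance: for barcodes B, B' and all t ∈ ℝ, |λ₁(B)(t) − λ₁(B')(t)| ≤ W_∞(B,B'), where λ₁ is the pointwise maximum of the tent functions f_{(a,b)} over the intervals of the barcode (with λ₁ of the empty barcode equal to 0). -/
/-- The tent function `f_{(a,b)}(t) = (min(t−a, b−t))₊`. -/
def tent (a b t : ℝ) : ℝ := max (min (t - a) (b - t)) 0

/-- The `k`-th persistence landscape function (`k ≥ 1`) of the barcode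
`b = {(a₁,b₁),…,(a_n,b_n)}`: the `k`-th largest value among `{f_{(aᵢ,bᵢ)}(t)}ᵢ`,
taken to be `0` if `k` exceeds the number of intervals. -/
noncomputable def landscape {n : ℕ} (b : Fin n → ℝ × ℝ) (k : ℕ) (t : ℝ) : ℝ :=
  (((Multiset.map (fun i => tent (b i).1 (b i).2 t)
      (Finset.univ.val : Multiset (Fin n))).sort (· ≤ ·)).reverse).getD (k - 1) 0

open scoped ENNReal

/-- Penalty `‖(a−a', b−b')‖_∞` between intervals. -/
def pen (I J : ℝ × ℝ) : ℝ := max |J.1 - I.1| |J.2 - I.2|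

/-- Augmentation of an `n`-bar barcode by countably many copies of each degenerate
interval `[x,x]`, `x ≥ 0`. -/
def Aug (n : ℕ) : Type := Fin n ⊕ (ℕ × {x : ℝ // 0 ≤ x})

/-- The interval attached to an element of the augmented index set. -/
def itv {n : ℕ} (b : Fin n → ℝ × ℝ) : Aug n → ℝ × ℝ
  | .inl i => b i
  | .inr p => (p.2.1, p.2.1)

/-- The cost (supremum of penalties) of a matching `θ`. -/
noncomputable def cost {n m : ℕ} (b : Fin n → ℝ × ℝ) (b' : Fin m → ℝ × ℝ)
    (θ : Aug n ≃ Aug m) : ℝ≥0∞ :=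
  ⨆ I : Aug n, ENNReal.ofReal (pen (itv b I) (itv b' (θ I)))

/-- The bottleneck distance `W_∞`. -/
noncomputable def W {n m : ℕ} (b : Fin n → ℝ × ℝ) (b' : Fin m → ℝ × ℝ) : ℝ≥0∞ :=
  ⨅ θ ∈ {θ : Aug n ≃ Aug m |
    {I : Aug n | pen (itv b I) (itv b' (θ I)) ≠ 0}.Finite}, cost b b' θ

/-! Moving the endpoints of an interval by at most `c` moves its tent by at most `c`, and
degenerate intervals have zero tent. Since `λ₁` is the least upper bound of `0` and the tents,
a matching of cost `c` gives `λ₁(B) ≤ λ₁(B') + c`, and its inverse gives the reverse bound. -/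

lemma tent_nonneg (a b t : ℝ) : 0 ≤ tent a b t := le_max_right _ _

lemma tent_self (x t : ℝ) : tent x x t = 0 :=
  max_eq_right <| by rcases le_total t x with h | h <;> simp [h]

lemma pen_comm (I J : ℝ × ℝ) : pen I J = pen J I := by
  simp only [pen, abs_sub_comm]

lemma tent_le_add_pen (I J : ℝ × ℝ) (t : ℝ) : tent I.1 I.2 t ≤ tent J.1 J.2 t + pen I J := by
  have h1 : |J.1 - I.1| ≤ pen I J := le_max_left _ _
  have h2 : |J.2 - I.2| ≤ pen I J := le_max_right _ _
  unfold tent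
  refine max_le ?_ (add_nonneg (le_max_right _ _) ((abs_nonneg _).trans h1))
  calc min (t - I.1) (I.2 - t)
      ≤ min (t - J.1 + pen I J) (J.2 - t + pen I J) := by
        gcongr <;> linarith [le_abs_self (J.1 - I.1), neg_abs_le (J.2 - I.2)]
    _ = min (t - J.1) (J.2 - t) + pen I J := min_add_add_right _ _ _
    _ ≤ max (min (t - J.1) (J.2 - t)) 0 + pen I J := by gcongr; exact le_max_left _ _

namespace List

lemma le_getD_zero_of_pairwise {α : Type*} [LinearOrder α] {l : List α}
    (hl : l.Pairwise (· ≥ ·)) {x : α} (hx : x ∈ l) (d : α) : x ≤ l.getD 0 d := by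
  cases l with
  | nil => simp at hx
  | cons a l =>
    rcases mem_cons.mp hx with rfl | h
    · simp
    · simpa using (pairwise_cons.mp hl).1 x h

lemma getD_zero_mem_or_eq {α : Type*} (l : List α) (d : α) : l.getD 0 d ∈ l ∨ l.getD 0 d = d := by
  cases l <;> simp

end List

section LandscapeOne

variable {n : ℕ} (b : Fin n → ℝ × ℝ) (t : ℝ)

noncomputable def tentsDesc : List ℝ :=
  ((Multiset.map (fun i => tent (b i).1 (b i).2 t)
    (Finset.univ.val : Multiset (Fin n))).sort (· ≤ ·)).reverse

lemma landscape_one_eq_getD : landscape b 1 t = (tentsDesc b t).getD 0 0 := rfl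

lemma tentsDesc_pairwise : (tentsDesc b t).Pairwise (· ≥ ·) :=
  List.pairwise_reverse.mpr (Multiset.pairwise_sort _ _)

lemma mem_tentsDesc {x : ℝ} : x ∈ tentsDesc b t ↔ ∃ i, tent (b i).1 (b i).2 t = x := by
  simp [tentsDesc]

lemma tent_le_landscape_one (i : Fin n) : tent (b i).1 (b i).2 t ≤ landscape b 1 t :=
  List.le_getD_zero_of_pairwise (tentsDesc_pairwise b t) ((mem_tentsDesc b t).mpr ⟨i, rfl⟩) 0

lemma landscape_one_eq_zero_or_tent :
    landscape b 1 t = 0 ∨ ∃ i, tent (b i).1 (b i).2 t = landscape b 1 t := by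
  rw [landscape_one_eq_getD]
  rcases List.getD_zero_mem_or_eq (tentsDesc b t) 0 with h | h
  · exact Or.inr ((mem_tentsDesc b t).mp h)
  · exact Or.inl h

lemma landscape_one_nonneg : 0 ≤ landscape b 1 t := by
  rcases landscape_one_eq_zero_or_tent b t with h | ⟨i, h⟩
  · exact h.ge
  · exact h ▸ tent_nonneg _ _ _

lemma landscape_one_le {c : ℝ} (hc : 0 ≤ c) (h : ∀ i, tent (b i).1 (b i).2 t ≤ c) :
    landscape b 1 t ≤ c := by
  rcases landscape_one_eq_zero_or_tent b t with h0 | ⟨i, hi⟩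
  · exact h0 ▸ hc
  · exact hi ▸ h i

lemma tent_itv_le_landscape_one (I : Aug n) :
    tent (itv b I).1 (itv b I).2 t ≤ landscape b 1 t := by
  cases I with
  | inl i => exact tent_le_landscape_one b t i
  | inr p => simpa [itv, tent_self] using landscape_one_nonneg b t

end LandscapeOne

lemma landscape_one_le_add {n m : ℕ} (b : Fin n → ℝ × ℝ) (b' : Fin m → ℝ × ℝ) (t : ℝ)
    {c : ℝ} (hc : 0 ≤ c) (f : Fin n → Aug m) (hf : ∀ i, pen (b i) (itv b' (f i)) ≤ c) :
    landscape b 1 t ≤ landscape b' 1 t + c :=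
  landscape_one_le b t (add_nonneg (landscape_one_nonneg b' t) hc) fun i =>
    (tent_le_add_pen _ _ t).trans (add_le_add (tent_itv_le_landscape_one b' t _) (hf i))

lemma pen_le_toReal_cost {n m : ℕ} (b : Fin n → ℝ × ℝ) (b' : Fin m → ℝ × ℝ)
    {θ : Aug n ≃ Aug m} (hθ : cost b b' θ ≠ ⊤) (I : Aug n) :
    pen (itv b I) (itv b' (θ I)) ≤ (cost b b' θ).toReal :=
  (ENNReal.ofReal_le_iff_le_toReal hθ).mp <|
    le_iSup (fun I => ENNReal.ofReal (pen (itv b I) (itv b' (θ I)))) I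

theorem landscape_one_bottleneck_stable_general {n m : ℕ}
    (b : Fin n → ℝ × ℝ) (b' : Fin m → ℝ × ℝ) (t : ℝ) :
    ENNReal.ofReal |landscape b 1 t - landscape b' 1 t| ≤ W b b' := by
  refine le_iInf₂ fun θ _ => ?_
  by_cases htop : cost b b' θ = ⊤
  · exact htop ▸ le_top
  have hpen := pen_le_toReal_cost b b' htop
  have hc : 0 ≤ (cost b b' θ).toReal := ENNReal.toReal_nonneg
  have hle := landscape_one_le_add b b' t hc (fun i => θ (.inl i)) fun i => hpen (.inl i)
  have hge := landscape_one_le_add b' b t hc (fun j => θ.symm (.inl j)) fun j => by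
    have h := hpen (θ.symm (.inl j))
    rwa [θ.apply_symm_apply (.inl j), pen_comm] at h
  rw [← ENNReal.ofReal_toReal htop]
  exact ENNReal.ofReal_le_ofReal (abs_sub_le_iff.mpr ⟨by linarith, by linarith⟩)

/-- The first landscape function is 1-Lipschitz with respect to the bottleneck
distance: `|λ₁(B)(t) − λ₁(B')(t)| ≤ W_∞(B,B')`. -/
theorem landscape_one_bottleneck_stable {n m : ℕ}
    (b : Fin n → ℝ × ℝ) (b' : Fin m → ℝ × ℝ)
    (hb : ∀ i, 0 ≤ (b i).1 ∧ (b i).1 ≤ (b i).2)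
    (hb' : ∀ i, 0 ≤ (b' i).1 ∧ (b' i).1 ≤ (b' i).2) (t : ℝ) :
    ENNReal.ofReal |landscape b 1 t - landscape b' 1 t| ≤ W b b' :=
  landscape_one_bottleneck_stable_general b b' t
end

section
/- The two-variable power sums x_{i,j}(B) = Σ_s (y_s − x_s)^i (y_s + x_s)^j, for integers i ≥ 1 and j ≥ 0, separate points of barcode space restricted to barcodes with a fixed number n of non-degenerate intervals: if two multisets of n intervals with x_s < y_s have equal values x_{i,j} for all i ≥ 1, j ≥ 0, then the multisets are equal. -/
/-!
In the coordinates `u = y - x > 0`, `v = y + x`, the hypothesis says that the weighted moments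
`Σ_s u_s P(u_s, v_s)` of the two barcodes agree for every polynomial `P`. For a point `q`, the
product of squared distances from `(u, v)` to all other points of either barcode vanishes
everywhere except at `q`, so this moment is the multiplicity of `q` times a nonzero number.
-/

/-- The two-variable power sum `x_{i,j}(B) = Σ_s (y_s − x_s)^i (y_s + x_s)^j` of a
barcode with `n` intervals. -/
def powerSum {n : ℕ} (i j : ℕ) (b : Fin n → ℝ × ℝ) : ℝ :=
  ∑ s : Fin n, ((b s).2 - (b s).1) ^ i * ((b s).2 + (b s).1) ^ j

open Finset MvPolynomial

theorem exists_perm_of_card_fiber_eq {ι γ : Type*} [Fintype ι] [DecidableEq γ] {f g : ι → γ}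
    (h : ∀ c, #{s | f s = c} = #{s | g s = c}) : ∃ e : Equiv.Perm ι, ∀ s, g (e s) = f s := by
  refine ⟨Equiv.ofFiberEquiv fun c => Fintype.equivOfCardEq ?_, Equiv.ofFiberEquiv_map _⟩
  simpa only [Fintype.card_subtype] using h c

section WeightedMoments

variable {ι σ R : Type*} [Fintype ι]

theorem sum_mul_eval_eq_of_forall_monomial [CommSemiring R] {a a' : ι → σ → R}
    (w : (σ → R) → R)
    (h : ∀ d : σ →₀ ℕ, ∑ s, w (a s) * eval (a s) (monomial d 1)
      = ∑ s, w (a' s) * eval (a' s) (monomial d 1))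
    (p : MvPolynomial σ R) :
    ∑ s, w (a s) * eval (a s) p = ∑ s, w (a' s) * eval (a' s) p := by
  induction p using MvPolynomial.induction_on' with
  | monomial d c =>
    have hmul (x : σ → R) : eval x (monomial d c) = c * eval x (monomial d 1) := by
      rw [eval_monomial, eval_monomial, one_mul]
    simp only [hmul, mul_left_comm _ c, ← mul_sum, h d]
  | add p q hp hq => simp only [map_add, mul_add, sum_add_distrib, hp, hq]

variable [Field R] [LinearOrder R] [IsStrictOrderedRing R]

theorem exists_eval_eq_zero_of_notMem [Fintype σ] {S : Finset (σ → R)} {q : σ → R}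
    (hq : q ∉ S) : ∃ p : MvPolynomial σ R, (∀ r ∈ S, eval r p = 0) ∧ eval q p ≠ 0 := by
  refine ⟨∏ r ∈ S, ∑ k, (X k - C (r k)) ^ 2, fun r hr => ?_, ?_⟩
  · simp only [map_prod, map_sum, map_pow, map_sub, eval_X, eval_C]
    exact prod_eq_zero hr (by simp)
  · simp only [map_prod, map_sum, map_pow, map_sub, eval_X, eval_C]
    refine prod_ne_zero_iff.2 fun r hr hzero => hq ?_
    have hcoord := (sum_eq_zero_iff_of_nonneg fun k _ => sq_nonneg (q k - r k)).1 hzero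
    convert hr using 1
    funext k
    exact sub_eq_zero.1 (pow_eq_zero_iff two_ne_zero |>.1 (hcoord k (mem_univ k)))

theorem card_fiber_eq_of_sum_mul_eval_eq [Fintype σ] [DecidableEq (σ → R)] {a a' : ι → σ → R}
    {w : (σ → R) → R}
    (h : ∀ p : MvPolynomial σ R, ∑ s, w (a s) * eval (a s) p = ∑ s, w (a' s) * eval (a' s) p)
    {q : σ → R} (hq : w q ≠ 0) : #{s | a s = q} = #{s | a' s = q} := by
  obtain ⟨p, hp, hpq⟩ :=
    exists_eval_eq_zero_of_notMem (notMem_erase q (univ.image a ∪ univ.image a'))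
  have hsum (b : ι → σ → R) (hb : ∀ s, b s ∈ univ.image a ∪ univ.image a') :
      ∑ s, w (b s) * eval (b s) p = #{s | b s = q} * (w q * eval q p) := by
    rw [← nsmul_eq_mul, ← sum_const, sum_filter]
    refine sum_congr rfl fun s _ => ?_
    split_ifs with hs
    · rw [hs]
    · rw [hp _ (mem_erase.2 ⟨hs, hb s⟩), mul_zero]
  have hmoment := h p
  rw [hsum a (fun s => mem_union_left _ (mem_image_of_mem a (mem_univ s))),
    hsum a' (fun s => mem_union_right _ (mem_image_of_mem a' (mem_univ s)))] at hmoment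
  exact_mod_cast mul_right_cancel₀ (mul_ne_zero hq hpq) hmoment

theorem exists_perm_of_sum_mul_eval_monomial_eq [Fintype σ] {a a' : ι → σ → R}
    {w : (σ → R) → R} (hw : ∀ s, w (a s) ≠ 0) (hw' : ∀ s, w (a' s) ≠ 0)
    (h : ∀ d : σ →₀ ℕ, ∑ s, w (a s) * eval (a s) (monomial d 1)
      = ∑ s, w (a' s) * eval (a' s) (monomial d 1)) :
    ∃ e : Equiv.Perm ι, ∀ s, a' (e s) = a s := by
  classical
  refine exists_perm_of_card_fiber_eq fun q => ?_
  by_cases hq : w q = 0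
  · have hempty (b : ι → σ → R) (hb : ∀ s, w (b s) ≠ 0) : #{s | b s = q} = 0 :=
      card_eq_zero.2 (filter_eq_empty_iff.2 fun s _ hs => hb s (hs ▸ hq))
    rw [hempty a hw, hempty a' hw']
  · exact card_fiber_eq_of_sum_mul_eval_eq (sum_mul_eval_eq_of_forall_monomial w h) hq

end WeightedMoments

def diffSum (p : ℝ × ℝ) : Fin 2 → ℝ := ![p.2 - p.1, p.2 + p.1]

theorem diffSum_injective : Function.Injective diffSum := by
  intro p p' h
  have h0 := congrFun h 0
  have h1 := congrFun h 1
  simp only [diffSum, Matrix.cons_val_zero, Matrix.cons_val_one] at h0 h1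
  exact Prod.ext (by linarith) (by linarith)

theorem powerSum_succ_eq_sum_mul_eval {n : ℕ} (b : Fin n → ℝ × ℝ) (d : Fin 2 →₀ ℕ) :
    powerSum (d 0 + 1) (d 1) b = ∑ s, diffSum (b s) 0 * eval (diffSum (b s)) (monomial d 1) := by
  refine sum_congr rfl fun s _ => ?_
  simp only [eval_monomial, Finsupp.prod_fintype _ _ (fun _ => pow_zero _), Fin.prod_univ_two,
    diffSum, Matrix.cons_val_zero, Matrix.cons_val_one]
  ring

/-- The power sums `x_{i,j}` for `i ≥ 1`, `j ≥ 0` separate barcodes with `n`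
non-degenerate intervals: if all the power sums agree, the two unordered collections of
intervals coincide (up to a permutation of the index set). -/
theorem powerSums_separate {n : ℕ} (b b' : Fin n → ℝ × ℝ)
    (hb : ∀ s, 0 ≤ (b s).1 ∧ (b s).1 < (b s).2)
    (hb' : ∀ s, 0 ≤ (b' s).1 ∧ (b' s).1 < (b' s).2)
    (h : ∀ i j : ℕ, 1 ≤ i → powerSum i j b = powerSum i j b') :
    ∃ e : Equiv.Perm (Fin n), ∀ s, b' (e s) = b s := by
  have hpos (c : Fin n → ℝ × ℝ) (hc : ∀ s, 0 ≤ (c s).1 ∧ (c s).1 < (c s).2) (s : Fin n) :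
      diffSum (c s) 0 ≠ 0 :=
    (sub_pos.2 (hc s).2).ne'
  obtain ⟨e, he⟩ := exists_perm_of_sum_mul_eval_monomial_eq (w := fun x => x 0)
    (hpos b hb) (hpos b' hb') fun d => by
      simpa only [powerSum_succ_eq_sum_mul_eval] using h (d 0 + 1) (d 1) (Nat.le_add_left 1 _)
  exact ⟨e, fun s => diffSum_injective (he s)⟩
end
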